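/- There is no finite constant C > 0 such that ‖T(f₁,f₂)‖_{3/2} ≤ C ‖f₁‖_3 ‖f₂‖_1 holds for all nonnegative measurable functions f₁, f₂ on ℝ; that is, in dimension n = 2 the bilinear spherical average T fails to be of strong type at the point G = (1/3, 1; 2/3). -/

import Mathlib

open MeasureTheory ENNReal

/-- The `L^p` "norm" (with respect to Lebesgue measure on `ℝ`) of an
`ℝ≥0∞`-valued function, with the convention for `p = ∞`. -/
noncomputable def lpNorm (p : ℝ≥0∞) (g : ℝ → ℝ≥0∞) : ℝ≥0∞ :=
  if p = ∞ then essSup g (volume : Measure ℝ)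
  else (∫⁻ x, g x ^ p.toReal) ^ (1 / p.toReal)

/-- The bilinear spherical average in dimension `n = 2`:
`T(f₁,f₂)(x) = (1/(2π)) ∫₀^{2π} f₁(x − cos t) f₂(x − sin t) dt`. -/
noncomputable def T2 (f₁ f₂ : ℝ → ℝ) (x : ℝ) : ℝ≥0∞ :=
  (ENNReal.ofReal (2 * Real.pi))⁻¹ *
    ∫⁻ t in Set.Ioc 0 (2 * Real.pi),
      ENNReal.ofReal (f₁ (x - Real.cos t)) * ENNReal.ofReal (f₂ (x - Real.sin t))
/-!
Put `r_j = 8^{-(j+1)}` and `ε = r_K²`. Take `f₂ = ε⁻¹ χ_[0,ε]`, so `‖f₂‖₁ = 1`, and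
`f₁ = ∑_{j<K} r_j^{-1/3} χ_{I_j}` with `I_j = [1 - 3r_j, 1 - r_j]` disjoint, so `‖f₁‖₃³ = 2K`.
For `x ∈ E_j = [1 - 2r_j², 1 - r_j²]` we have `cos (arcsin x) ≈ r_j`, so on an arc of length
`ε / (4 r_j)` ending at `arcsin x` the point `x - sin t` stays in `[0, ε]` while `x - cos t` stays
in `I_j`. Hence `T(f₁,f₂) ≳ r_j^{-4/3}` on `E_j`, each of the disjoint sets `E_j` contributes a
fixed amount to `∫ T(f₁,f₂)^{3/2}`, and `‖T(f₁,f₂)‖_{3/2} ≳ K^{2/3}`, which outgrows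
`‖f₁‖₃ ‖f₂‖₁ = (2K)^{1/3}`.
-/

open Real Set Function

lemma lpNorm_rpow_toReal {p : ℝ≥0∞} (hp₀ : p ≠ 0) (hp : p ≠ ∞) (g : ℝ → ℝ≥0∞) :
    lpNorm p g ^ p.toReal = ∫⁻ x, g x ^ p.toReal := by
  rw [_root_.lpNorm, if_neg hp, ← ENNReal.rpow_mul, one_div,
    inv_mul_cancel₀ (ENNReal.toReal_ne_zero.2 ⟨hp₀, hp⟩), ENNReal.rpow_one]

section DisjointIndicators

variable {ι α : Type*} {s : Finset ι} {A : ι → Set α}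

lemma sum_indicator_eq_of_mem {M : Type*} [AddCommMonoid M]
    (hA : (s : Set ι).PairwiseDisjoint A) (c : ι → M) {j : ι} (hj : j ∈ s) {x : α}
    (hx : x ∈ A j) : ∑ i ∈ s, (A i).indicator (fun _ => c i) x = c j := by
  rw [Finset.sum_eq_single_of_mem j hj fun i hi hij =>
    indicator_of_notMem (fun hxi => disjoint_left.mp (hA hi hj hij) hxi hx) _]
  exact indicator_of_mem hx _

lemma sum_indicator_eq_zero_of_forall_notMem {M : Type*} [AddCommMonoid M] (c : ι → M) {x : α}
    (hx : ∀ i ∈ s, x ∉ A i) : ∑ i ∈ s, (A i).indicator (fun _ => c i) x = 0 :=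
  Finset.sum_eq_zero fun i hi => indicator_of_notMem (hx i hi) _

lemma sum_indicator_le_of_pairwiseDisjoint (hA : (s : Set ι).PairwiseDisjoint A)
    {c : ι → ℝ≥0∞} {g : α → ℝ≥0∞} (hg : ∀ i ∈ s, ∀ x ∈ A i, c i ≤ g x) (x : α) :
    ∑ i ∈ s, (A i).indicator (fun _ => c i) x ≤ g x := by
  by_cases hx : ∃ j ∈ s, x ∈ A j
  · obtain ⟨j, hj, hxj⟩ := hx
    rw [sum_indicator_eq_of_mem hA c hj hxj]
    exact hg j hj x hxj
  · push Not at hx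
    rw [sum_indicator_eq_zero_of_forall_notMem c hx]
    exact zero_le

lemma rpow_sum_indicator_of_pairwiseDisjoint (hA : (s : Set ι).PairwiseDisjoint A)
    (c : ι → ℝ≥0∞) {q : ℝ} (hq : 0 < q) (x : α) :
    (∑ i ∈ s, (A i).indicator (fun _ => c i) x) ^ q
      = ∑ i ∈ s, (A i).indicator (fun _ => c i ^ q) x := by
  by_cases hx : ∃ j ∈ s, x ∈ A j
  · obtain ⟨j, hj, hxj⟩ := hx
    rw [sum_indicator_eq_of_mem hA c hj hxj, sum_indicator_eq_of_mem hA _ hj hxj]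
  · push Not at hx
    rw [sum_indicator_eq_zero_of_forall_notMem c hx, sum_indicator_eq_zero_of_forall_notMem _ hx,
      ENNReal.zero_rpow_of_pos hq]

lemma lintegral_rpow_sum_indicator [MeasurableSpace α] (μ : Measure α)
    (hA : (s : Set ι).PairwiseDisjoint A) (hAm : ∀ i, MeasurableSet (A i))
    (c : ι → ℝ≥0∞) {q : ℝ} (hq : 0 < q) :
    ∫⁻ x, (∑ i ∈ s, (A i).indicator (fun _ => c i) x) ^ q ∂μ = ∑ i ∈ s, c i ^ q * μ (A i) := by
  simp_rw [rpow_sum_indicator_of_pairwiseDisjoint hA c hq]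
  rw [lintegral_finsetSum _ fun i _ => measurable_const.indicator (hAm i)]
  exact Finset.sum_congr rfl fun i _ => lintegral_indicator_const (hAm i) _

end DisjointIndicators

lemma pairwise_disjoint_Icc_one_sub {r : ℕ → ℝ} {a : ℝ} (hr : Antitone r) (ha : 0 ≤ a)
    (hstep : ∀ i, a * r (i + 1) < r i) :
    Pairwise (Disjoint on (fun j => Icc (1 - a * r j) (1 - r j))) := by
  refine (pairwise_disjoint_on _).2 fun i j hij => disjoint_left.2 fun y hyi hyj => ?_
  have : a * r j ≤ a * r (i + 1) := mul_le_mul_of_nonneg_left (hr hij) ha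
  linarith [hyi.2, hyj.1, hstep i]

lemma sin_add_le_add_mul_cos {t h : ℝ} (hs : 0 ≤ sin t) (hc : 0 ≤ cos t) (hh : 0 ≤ h) :
    sin (t + h) ≤ sin t + h * cos t := by
  rw [sin_add]
  nlinarith [cos_le_one h, sin_le hh]

lemma mem_Ioc_and_sub_sin_cos_mem_Icc {r ε x t : ℝ} (hr : 0 < r) (hr₄ : r ≤ 1 / 4)
    (hεr : ε ≤ r ^ 2) (hx : x ∈ Icc (1 - 2 * r ^ 2) (1 - r ^ 2))
    (ht : t ∈ Ioc (arcsin x - ε / (4 * r)) (arcsin x)) :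
    t ∈ Ioc 0 (2 * π) ∧ x - sin t ∈ Icc 0 ε ∧ x - cos t ∈ Icc (1 - 3 * r) (1 - r) := by
  obtain ⟨hx₁, hx₂⟩ := hx
  obtain ⟨ht₁, ht₂⟩ := ht
  set t₀ := arcsin x
  set δ := ε / (4 * r) with hδ
  have hδr : δ * r = ε / 4 := by rw [hδ]; field_simp
  have hδ_le : δ ≤ r / 4 := by nlinarith
  have hsin₀ : sin t₀ = x := sin_arcsin (by nlinarith) (by nlinarith)
  have hcos₀_le : cos t₀ ≤ 2 * r := by
    rw [cos_arcsin]
    exact sqrt_le_iff.2 ⟨by positivity, by nlinarith⟩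
  have hcos₀_ge : r ≤ cos t₀ := by
    rw [cos_arcsin]
    have hx₀ : 0 ≤ x := by nlinarith
    exact le_sqrt_of_sq_le (by nlinarith [mul_nonneg (sub_nonneg.2 hx₂) hx₀])
  have ht₀ : t₀ ≤ π / 2 := arcsin_le_pi_div_two x
  have hxt₀ : x ≤ t₀ := hsin₀ ▸ sin_le (arcsin_nonneg.2 (by nlinarith))
  have ht_pos : 0 < t := by nlinarith
  have ht_le : t ≤ π / 2 := ht₂.trans ht₀
  have hcos_ge : cos t₀ ≤ cos t := cos_le_cos_of_nonneg_of_le_pi ht_pos.le (by linarith) ht₂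
  have hcos_le : cos t ≤ cos t₀ + (t₀ - t) := by
    have := (abs_le.1 (abs_cos_sub_cos_le t t₀)).2
    rw [abs_of_nonpos (by linarith)] at this
    linarith
  have hsin_ge : x ≤ sin t + (t₀ - t) * cos t := by
    have := sin_add_le_add_mul_cos (sin_nonneg_of_nonneg_of_le_pi ht_pos.le (by linarith))
      (cos_nonneg_of_mem_Icc ⟨by linarith, ht_le⟩) (sub_nonneg.2 ht₂)
    rwa [add_sub_cancel, hsin₀] at this
  refine ⟨⟨ht_pos, by linarith [pi_pos]⟩, ⟨?_, ?_⟩, by constructor <;> nlinarith⟩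
  · rw [sub_nonneg, ← hsin₀]
    exact sin_le_sin_of_le_of_le_pi_div_two (by linarith [pi_pos]) ht₀ ht₂
  · calc x - sin t ≤ (t₀ - t) * cos t := by linarith
      _ ≤ δ * (9 / 4 * r) := by gcongr <;> linarith
      _ ≤ ε := by nlinarith

lemma le_T2_of_forall_mem {f₁ f₂ : ℝ → ℝ} {x a b : ℝ} {S : Set ℝ} (hS : S ⊆ Ioc 0 (2 * π))
    (hSm : MeasurableSet S) (h₁ : ∀ t ∈ S, a ≤ f₁ (x - cos t))
    (h₂ : ∀ t ∈ S, b ≤ f₂ (x - sin t)) :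
    (ENNReal.ofReal (2 * π))⁻¹ * (ENNReal.ofReal a * ENNReal.ofReal b * volume S)
      ≤ T2 f₁ f₂ x := by
  refine mul_le_mul_right ?_ _
  calc ENNReal.ofReal a * ENNReal.ofReal b * volume S
        = ∫⁻ _ in S, ENNReal.ofReal a * ENNReal.ofReal b := (setLIntegral_const _ _).symm
    _ ≤ ∫⁻ t in S, ENNReal.ofReal (f₁ (x - cos t)) * ENNReal.ofReal (f₂ (x - sin t)) :=
        setLIntegral_mono' hSm fun t ht => by gcongr <;> simp_all
    _ ≤ _ := lintegral_mono_set hS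

namespace Counterexample

noncomputable def scale (j : ℕ) : ℝ := 8⁻¹ ^ (j + 1)

noncomputable def I (j : ℕ) : Set ℝ := Icc (1 - 3 * scale j) (1 - scale j)

noncomputable def E (j : ℕ) : Set ℝ := Icc (1 - 2 * scale j ^ 2) (1 - scale j ^ 2)

noncomputable def f₁ (K : ℕ) (y : ℝ) : ℝ :=
  ∑ j ∈ Finset.range K, (I j).indicator (fun _ => 2 ^ (j + 1)) y

noncomputable def f₂ (K : ℕ) (y : ℝ) : ℝ :=
  (Icc 0 (scale K ^ 2)).indicator (fun _ => (scale K ^ 2)⁻¹) y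

lemma scale_pos (j : ℕ) : 0 < scale j := by unfold scale; positivity

lemma scale_succ (j : ℕ) : scale (j + 1) = 8⁻¹ * scale j := by unfold scale; ring

lemma scale_antitone : Antitone scale :=
  fun _ _ h => pow_le_pow_of_le_one (by norm_num) (by norm_num) (by omega)

lemma scale_le (j : ℕ) : scale j ≤ 1 / 4 := by
  unfold scale
  calc (8⁻¹ : ℝ) ^ (j + 1) ≤ 8⁻¹ ^ 1 :=
        pow_le_pow_of_le_one (by norm_num) (by norm_num) (by omega)
    _ ≤ 1 / 4 := by norm_num

lemma pairwiseDisjoint_I (K : ℕ) : (Finset.range K : Set ℕ).PairwiseDisjoint I :=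
  (pairwise_disjoint_Icc_one_sub scale_antitone (by norm_num) fun i => by
    rw [scale_succ]; linarith [scale_pos i]).set_pairwise _

lemma pairwiseDisjoint_E (K : ℕ) : (Finset.range K : Set ℕ).PairwiseDisjoint E :=
  (pairwise_disjoint_Icc_one_sub
    (fun _ _ h => pow_le_pow_left₀ (scale_pos _).le (scale_antitone h) 2) (by norm_num)
    fun i => by rw [scale_succ]; nlinarith [scale_pos i]).set_pairwise _

lemma measurable_f₁ (K : ℕ) : Measurable (f₁ K) :=
  Finset.measurable_sum _ fun _ _ => measurable_const.indicator measurableSet_Icc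

lemma measurable_f₂ (K : ℕ) : Measurable (f₂ K) :=
  measurable_const.indicator measurableSet_Icc

lemma f₁_nonneg (K : ℕ) (y : ℝ) : 0 ≤ f₁ K y :=
  Finset.sum_nonneg fun _ _ => indicator_nonneg (fun _ _ => by positivity) y

lemma f₂_nonneg (K : ℕ) (y : ℝ) : 0 ≤ f₂ K y :=
  indicator_nonneg (fun _ _ => by have := scale_pos K; positivity) y

lemma le_f₁ {K j : ℕ} (hj : j ∈ Finset.range K) {y : ℝ} (hy : y ∈ I j) :
    2 ^ (j + 1) ≤ f₁ K y := by
  rw [f₁, sum_indicator_eq_of_mem (pairwiseDisjoint_I K) _ hj hy]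

lemma ofReal_f₁ (K : ℕ) (y : ℝ) :
    ENNReal.ofReal (f₁ K y)
      = ∑ j ∈ Finset.range K, (I j).indicator (fun _ => (2 : ℝ≥0∞) ^ (j + 1)) y := by
  rw [f₁, ENNReal.ofReal_sum_of_nonneg fun _ _ => indicator_nonneg (fun _ _ => by positivity) y]
  refine Finset.sum_congr rfl fun j _ => ?_
  by_cases hy : y ∈ I j <;> simp [hy]

lemma volume_I (j : ℕ) : volume (I j) = 2 * 8⁻¹ ^ (j + 1) := by
  rw [I, Real.volume_Icc, show 1 - scale j - (1 - 3 * scale j) = 2 * scale j by ring, scale,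
    ENNReal.ofReal_mul zero_le_two, ENNReal.ofReal_pow (by norm_num),
    ENNReal.ofReal_inv_of_pos (by norm_num)]
  norm_num

lemma lpNorm_f₁_pow (K : ℕ) : lpNorm 3 (fun y => ENNReal.ofReal (f₁ K y)) ^ 3 = 2 * K := by
  have h := lpNorm_rpow_toReal (p := 3) (by norm_num) (by norm_num)
    fun y => ENNReal.ofReal (f₁ K y)
  rw [toReal_ofNat] at h
  rw [← ENNReal.rpow_ofNat, h]
  simp_rw [ofReal_f₁]
  rw [lintegral_rpow_sum_indicator volume (pairwiseDisjoint_I K) (fun _ => measurableSet_Icc) _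
    (by norm_num)]
  have hterm (j : ℕ) : ((2 : ℝ≥0∞) ^ (j + 1)) ^ (3 : ℝ) * volume (I j) = 2 := by
    rw [ENNReal.rpow_ofNat, volume_I, mul_left_comm, ← pow_mul, mul_comm (j + 1), pow_mul,
      ← mul_pow]
    norm_num [ENNReal.mul_inv_cancel]
  rw [Finset.sum_congr rfl fun j _ => hterm j, Finset.sum_const, Finset.card_range, nsmul_eq_mul,
    mul_comm]

lemma lpNorm_f₂ (K : ℕ) : lpNorm 1 (fun y => ENNReal.ofReal (f₂ K y)) = 1 := by
  have h := lpNorm_rpow_toReal one_ne_zero one_ne_top fun y => ENNReal.ofReal (f₂ K y)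
  simp only [toReal_one, ENNReal.rpow_one] at h
  rw [h]
  have hf₂ (y : ℝ) : ENNReal.ofReal (f₂ K y)
      = (Icc 0 (scale K ^ 2)).indicator (fun _ => ENNReal.ofReal (scale K ^ 2)⁻¹) y := by
    by_cases hy : y ∈ Icc 0 (scale K ^ 2) <;> simp [f₂, hy]
  simp_rw [hf₂]
  have hε := scale_pos K
  rw [lintegral_indicator_const measurableSet_Icc, Real.volume_Icc, sub_zero,
    ← ENNReal.ofReal_mul (by positivity), inv_mul_cancel₀ (by positivity), ENNReal.ofReal_one]

lemma le_T2_f₁_f₂ {K j : ℕ} (hj : j ∈ Finset.range K) {x : ℝ} (hx : x ∈ E j) :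
    ENNReal.ofReal ((8 * π)⁻¹ * 16 ^ (j + 1)) ≤ T2 (f₁ K) (f₂ K) x := by
  have hεr : scale K ^ 2 ≤ scale j ^ 2 :=
    pow_le_pow_left₀ (scale_pos K).le (scale_antitone (Finset.mem_range.1 hj).le) 2
  have hS := fun t (ht : t ∈ Ioc (arcsin x - scale K ^ 2 / (4 * scale j)) (arcsin x)) =>
    mem_Ioc_and_sub_sin_cos_mem_Icc (scale_pos j) (scale_le j) hεr hx ht
  refine le_of_eq_of_le ?_ (le_T2_of_forall_mem (fun t ht => (hS t ht).1) measurableSet_Ioc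
    (fun t ht => le_f₁ hj (hS t ht).2.2)
    (fun t ht => (indicator_of_mem (hS t ht).2.1 fun _ => (scale K ^ 2)⁻¹).ge))
  -- `(2π)⁻¹ · 2^(j+1) · ε⁻¹ · ε / (4 r_j)` with `ε = r_K²`, `r_j = 8^-(j+1)`
  have hε := scale_pos K
  rw [Real.volume_Ioc, ← ENNReal.ofReal_mul (by positivity), ← ENNReal.ofReal_mul (by positivity),
    ← ENNReal.ofReal_inv_of_pos (by positivity), ← ENNReal.ofReal_mul (by positivity)]
  congr 1
  rw [_root_.sub_sub_cancel, scale, scale, show (16 : ℝ) = 2 * 8 by norm_num, mul_pow]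
  simp only [inv_pow]
  field_simp
  ring

lemma rpow_three_halves_mul_volume_E (j : ℕ) :
    ENNReal.ofReal ((8 * π)⁻¹ * 16 ^ (j + 1)) ^ (3 / 2 : ℝ) * volume (E j)
      = ENNReal.ofReal ((8 * π)⁻¹ ^ (3 / 2 : ℝ)) := by
  have h16 (n : ℕ) : ((16 : ℝ) ^ n) ^ (3 / 2 : ℝ) = 64 ^ n := by
    rw [show (16 : ℝ) ^ n = ((4 : ℝ) ^ n) ^ (2 : ℝ) by norm_num [← pow_mul, pow_mul'],
      ← Real.rpow_mul (by positivity)]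
    norm_num [← pow_mul, pow_mul']
  rw [E, Real.volume_Icc, ENNReal.ofReal_rpow_of_nonneg (by positivity) (by norm_num),
    ← ENNReal.ofReal_mul (by positivity)]
  congr 1
  rw [Real.mul_rpow (by positivity) (by positivity), h16, scale, show (64 : ℝ) = 8 ^ 2 by norm_num,
    ← pow_mul, mul_comm 2, pow_mul, inv_pow]
  field_simp
  ring

lemma mul_le_lintegral_T2_rpow (K : ℕ) :
    K * ENNReal.ofReal ((8 * π)⁻¹ ^ (3 / 2 : ℝ)) ≤ ∫⁻ x, T2 (f₁ K) (f₂ K) x ^ (3 / 2 : ℝ) :=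
  calc K * ENNReal.ofReal ((8 * π)⁻¹ ^ (3 / 2 : ℝ))
      = ∑ j ∈ Finset.range K,
          ENNReal.ofReal ((8 * π)⁻¹ * 16 ^ (j + 1)) ^ (3 / 2 : ℝ) * volume (E j) := by
        rw [Finset.sum_congr rfl fun j _ => rpow_three_halves_mul_volume_E j]
        simp
    _ = ∫⁻ x, (∑ j ∈ Finset.range K,
          (E j).indicator (fun _ => ENNReal.ofReal ((8 * π)⁻¹ * 16 ^ (j + 1))) x) ^ (3 / 2 : ℝ) :=
        (lintegral_rpow_sum_indicator volume (pairwiseDisjoint_E K) (fun _ => measurableSet_Icc) _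
          (by norm_num)).symm
    _ ≤ ∫⁻ x, T2 (f₁ K) (f₂ K) x ^ (3 / 2 : ℝ) :=
        lintegral_mono fun x => ENNReal.rpow_le_rpow (sum_indicator_le_of_pairwiseDisjoint
          (pairwiseDisjoint_E K) (fun _ hj _ hx => le_T2_f₁_f₂ hj hx) x) (by norm_num)

end Counterexample

lemma exists_nat_mul_lt_sq {a B : ℝ≥0∞} (ha : a ≠ 0) (hB : B ≠ ∞) :
    ∃ K : ℕ, B * K < (K * a) ^ 2 := by
  obtain ⟨n, hn⟩ := ENNReal.exists_nat_gt (ENNReal.div_ne_top hB (pow_ne_zero 2 ha))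
  refine ⟨n + 1, ?_⟩
  have hB' : B < (n + 1 : ℕ) * a ^ 2 :=
    (ENNReal.div_lt_iff (Or.inl (pow_ne_zero 2 ha)) (Or.inr hB)).1
      (hn.trans (by exact_mod_cast n.lt_succ_self))
  calc B * (n + 1 : ℕ) < (n + 1 : ℕ) * a ^ 2 * (n + 1 : ℕ) :=
        ENNReal.mul_lt_mul_left (by positivity) (ENNReal.natCast_ne_top _) hB'
    _ = ((n + 1 : ℕ) * a) ^ 2 := by ring

open Counterexample in
theorem not_strong_type_at_G :
    ¬ ∃ C : ℝ, 0 < C ∧ ∀ f₁ f₂ : ℝ → ℝ, Measurable f₁ → Measurable f₂ →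
      (∀ x, 0 ≤ f₁ x) → (∀ x, 0 ≤ f₂ x) →
      lpNorm (3 / 2) (T2 f₁ f₂) ≤ ENNReal.ofReal C *
        lpNorm 3 (fun x => ENNReal.ofReal (f₁ x)) *
        lpNorm 1 (fun x => ENNReal.ofReal (f₂ x)) := by
  rintro ⟨C, -, hC⟩
  obtain ⟨K, hK⟩ := exists_nat_mul_lt_sq (B := ENNReal.ofReal C ^ 3 * 2)
    (ENNReal.ofReal_pos.2 (by positivity : 0 < (8 * π)⁻¹ ^ (3 / 2 : ℝ))).ne' (by finiteness)
  have hT := hC (f₁ K) (f₂ K) (measurable_f₁ K) (measurable_f₂ K) (f₁_nonneg K) (f₂_nonneg K)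
  rw [lpNorm_f₂, mul_one] at hT
  refine hK.not_ge ?_
  calc (K * ENNReal.ofReal ((8 * π)⁻¹ ^ (3 / 2 : ℝ))) ^ 2
      ≤ (∫⁻ x, T2 (f₁ K) (f₂ K) x ^ (3 / 2 : ℝ)) ^ 2 := by
        gcongr; exact mul_le_lintegral_T2_rpow K
    _ = lpNorm (3 / 2) (T2 (f₁ K) (f₂ K)) ^ 3 := by
        have h := lpNorm_rpow_toReal (p := 3 / 2) (by norm_num) (by finiteness) (T2 (f₁ K) (f₂ K))
        rw [show ((3 : ℝ≥0∞) / 2).toReal = 3 / 2 by norm_num] at h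
        rw [← h, ← ENNReal.rpow_natCast, ← ENNReal.rpow_mul]
        norm_num
    _ ≤ (ENNReal.ofReal C * lpNorm 3 fun y => ENNReal.ofReal (f₁ K y)) ^ 3 :=
        pow_le_pow_left₀ zero_le hT 3
    _ = ENNReal.ofReal C ^ 3 * 2 * K := by rw [mul_pow, lpNorm_f₁_pow, mul_assoc]
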